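/- For all real t with 0 < |t| < 1, Σ_{k=0}^∞ (−1)^k t^{2k} ζ({2}^k) = sin(πt)/(πt). -/
import Mathlib


open scoped BigOperators Real

open Finset Filter Topology

/-- The summand `1/(j+1)^2`. -/
noncomputable def cc : ℕ → ℝ := fun j => 1 / ((j : ℝ) + 1) ^ 2

lemma cc_nonneg (j : ℕ) : 0 ≤ cc j := by unfold cc; positivity

lemma cc_summable : Summable cc := by
  unfold cc
  have h : Summable (fun n : ℕ => 1 / (n : ℝ) ^ 2) := Real.summable_one_div_nat_pow.mpr one_lt_two
  have := (summable_nat_add_iff 1).mpr h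
  simpa [one_div] using this

/-- Decreasing positive `k`-tuples correspond to `k`-element finsets of `ℕ`. -/
noncomputable def finsetEquivTuple (k : ℕ) :
    {u : Finset ℕ // u.card = k} ≃
      {f : Fin k → ℕ // (∀ i j : Fin k, i < j → f j < f i) ∧ ∀ j, 0 < f j} where
  toFun u := ⟨fun j => u.1.orderEmbOfFin u.2 j.rev + 1,
    fun i j hij => by
      have : j.rev < i.rev := Fin.rev_lt_rev.mpr hij
      simpa using (u.1.orderEmbOfFin u.2).strictMono this,
    fun j => Nat.succ_pos _⟩
  invFun f := ⟨Finset.image (fun j => f.1 j - 1) Finset.univ, by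
    rw [Finset.card_image_of_injective _ ?_, Finset.card_univ, Fintype.card_fin]
    intro i j hij
    simp only at hij
    by_contra hne
    rcases lt_or_gt_of_ne hne with h | h
    · have := f.2.1 i j h
      have hi := f.2.2 j
      omega
    · have := f.2.1 j i h
      have hi := f.2.2 i
      omega⟩
  left_inv u := by
    ext m
    simp only [Nat.add_sub_cancel, Finset.mem_image, Finset.mem_univ, true_and]
    constructor
    · rintro ⟨j, rfl⟩
      exact u.1.orderEmbOfFin_mem u.2 j.rev
    · intro hm
      have : m ∈ Set.range (u.1.orderEmbOfFin u.2) := by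
        rw [Finset.range_orderEmbOfFin]; exact hm
      rcases this with ⟨i, hi⟩
      exact ⟨i.rev, by simpa [Fin.rev_rev] using hi⟩
  right_inv f := by
    have hpos := f.2.2
    have hdec := f.2.1
    have hmono : StrictMono (fun i : Fin k => f.1 i.rev - 1) := by
      intro i j hij
      simp only
      have h1 : j.rev < i.rev := Fin.rev_lt_rev.mpr hij
      have h2 := hdec j.rev i.rev h1
      have := hpos i.rev
      omega
    have hcard : (Finset.image (fun j => f.1 j - 1) Finset.univ).card = k := by
      rw [Finset.card_image_of_injective _ ?_, Finset.card_univ, Fintype.card_fin]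
      intro i j hij
      simp only at hij
      by_contra hne
      rcases lt_or_gt_of_ne hne with h | h
      · have := hdec i j h; have := hpos j; omega
      · have := hdec j i h; have := hpos i; omega
    have huniq := Finset.orderEmbOfFin_unique
      (f := fun i : Fin k => f.1 i.rev - 1) hcard
      (fun i => Finset.mem_image.mpr ⟨i.rev, Finset.mem_univ _, rfl⟩) hmono
    ext j
    simp only
    have h1 : (Finset.image (fun j => f.1 j - 1) Finset.univ).orderEmbOfFin hcard j.rev
        = f.1 j.rev.rev - 1 := (congrFun huniq j.rev).symm
    simp only [h1, Fin.rev_rev]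
    have := hpos j
    omega

lemma finsetEquivTuple_symm_apply (k : ℕ)
    (f : {f : Fin k → ℕ // (∀ i j : Fin k, i < j → f j < f i) ∧ ∀ j, 0 < f j}) :
    ((finsetEquivTuple k).symm f).1 = Finset.image (fun j => f.1 j - 1) Finset.univ := rfl

/-- The multiple zeta value `ζ({2}^k)` of depth `k` with all arguments equal to `2`. -/
noncomputable def zetaTwoRep (k : ℕ) : ℝ :=
  ∑' n : {f : Fin k → ℕ // (∀ i j : Fin k, i < j → f j < f i) ∧ ∀ j, 0 < f j},
    ∏ j : Fin k, (1 / (n.1 j : ℝ) ^ 2)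

lemma zetaTwoRep_eq (k : ℕ) :
    zetaTwoRep k = ∑' u : {u : Finset ℕ // u.card = k}, ∏ j ∈ u.1, cc j := by
  rw [zetaTwoRep, ← Equiv.tsum_eq (finsetEquivTuple k).symm]
  apply tsum_congr
  intro n
  rw [finsetEquivTuple_symm_apply, Finset.prod_image]
  · apply Finset.prod_congr rfl
    intro j _
    have h := n.2.2 j
    unfold cc
    rw [Nat.cast_sub h]
    push_cast
    ring_nf
  · intro i _ j _ hij
    simp only at hij
    have h1 := n.2.2 i
    have h2 := n.2.2 j
    by_contra hne
    rcases lt_or_gt_of_ne hne with h | h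
    · have := n.2.1 i j h; omega
    · have := n.2.1 j i h; omega

theorem sinc_generating_function (t : ℝ) (ht : 0 < |t|) (ht1 : |t| < 1) :
    ∑' k : ℕ, (-1 : ℝ) ^ k * t ^ (2 * k) * zetaTwoRep k = Real.sin (π * t) / (π * t) := by
  have htne : t ≠ 0 := abs_pos.mp ht
  have hπt : π * t ≠ 0 := mul_ne_zero Real.pi_ne_zero htne
  have ht2 : t ^ 2 ≤ 1 := by
    have h := sq_abs t
    nlinarith [abs_nonneg t]
  set F : Finset ℕ → ℝ := fun u => ∏ j ∈ u, (-(t ^ 2) * cc j) with hF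
  -- summability of the unsigned version
  have hGsum : Summable (fun u : Finset ℕ => ∏ j ∈ u, cc j) := by
    apply summable_of_sum_le (fun u => Finset.prod_nonneg fun j _ => cc_nonneg j)
    intro V
    set N := (V.sup fun u => u.sup id) + 1 with hN
    have hsub : V ⊆ (Finset.range N).powerset := by
      intro u hu
      rw [Finset.mem_powerset]
      intro j hj
      rw [Finset.mem_range, hN]
      have h1 : j ≤ u.sup id := Finset.le_sup (f := id) hj
      have h2 : u.sup id ≤ V.sup fun u => u.sup id := Finset.le_sup (f := fun u => u.sup id) hu
      omega
    calc ∑ u ∈ V, ∏ j ∈ u, cc j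
        ≤ ∑ u ∈ (Finset.range N).powerset, ∏ j ∈ u, cc j :=
          Finset.sum_le_sum_of_subset_of_nonneg hsub
            (fun u _ _ => Finset.prod_nonneg fun j _ => cc_nonneg j)
      _ = ∏ j ∈ Finset.range N, (cc j + 1) := by
          rw [Finset.prod_add]
          simp
      _ ≤ ∏ j ∈ Finset.range N, Real.exp (cc j) :=
          Finset.prod_le_prod (fun j _ => by linarith [cc_nonneg j])
            (fun j _ => by linarith [Real.add_one_le_exp (cc j)])
      _ = Real.exp (∑ j ∈ Finset.range N, cc j) := (Real.exp_sum _ _).symm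
      _ ≤ Real.exp (∑' j, cc j) :=
          Real.exp_le_exp.mpr (Summable.sum_le_tsum _ (fun j _ => cc_nonneg j) cc_summable)
  have hFsum : Summable F := by
    apply Summable.of_abs
    apply Summable.of_nonneg_of_le (fun u => abs_nonneg _) _ hGsum
    intro u
    rw [hF]
    calc |∏ j ∈ u, (-(t ^ 2) * cc j)| = ∏ j ∈ u, |(-(t ^ 2) * cc j)| := by
          rw [Finset.abs_prod]
      _ ≤ ∏ j ∈ u, cc j := by
          apply Finset.prod_le_prod (fun j _ => abs_nonneg _)
          intro j _
          rw [abs_mul, abs_neg, abs_of_nonneg (sq_nonneg t), abs_of_nonneg (cc_nonneg j)]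
          nlinarith [cc_nonneg j, sq_nonneg t]
  -- fiberwise sum over cardinality
  have hfiber := hFsum.hasSum.tsum_fiberwise Finset.card
  have key1 : ∑' k : ℕ, (-1 : ℝ) ^ k * t ^ (2 * k) * zetaTwoRep k = ∑' u : Finset ℕ, F u := by
    rw [← hfiber.tsum_eq]
    apply tsum_congr
    intro k
    rw [zetaTwoRep_eq, ← tsum_mul_left]
    apply tsum_congr
    intro u
    have hcard : (u.1 : Finset ℕ).card = k := u.2
    show (-1 : ℝ) ^ k * t ^ (2 * k) * ∏ j ∈ u.1, cc j = ∏ j ∈ u.1, (-(t ^ 2) * cc j)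
    rw [Finset.prod_mul_distrib, Finset.prod_const, hcard]
    rw [show (-(t ^ 2)) ^ k = (-1 : ℝ) ^ k * t ^ (2 * k) by rw [neg_pow, pow_mul]]
  -- tendsto along powersets of ranges
  have hmono : Monotone (fun N => (Finset.range N).powerset) :=
    fun a b hab => Finset.powerset_mono.mpr (Finset.range_subset_range.mpr hab)
  have hexh : ∀ u : Finset ℕ, ∃ N, u ∈ (Finset.range N).powerset := by
    intro u
    refine ⟨u.sup id + 1, Finset.mem_powerset.mpr fun j hj => ?_⟩
    rw [Finset.mem_range]
    have : id j ≤ u.sup id := Finset.le_sup hj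
    simp only [id] at this
    omega
  have htendsto : Tendsto (fun N => ∑ u ∈ (Finset.range N).powerset, F u) atTop
      (𝓝 (∑' u : Finset ℕ, F u)) :=
    hFsum.hasSum.comp (tendsto_atTop_finset_of_monotone hmono hexh)
  have heq : (fun N => ∑ u ∈ (Finset.range N).powerset, F u)
      = fun N => ∏ j ∈ Finset.range N, ((1 : ℝ) - t ^ 2 / ((j : ℝ) + 1) ^ 2) := by
    funext N
    rw [hF]
    calc ∑ u ∈ (Finset.range N).powerset, ∏ j ∈ u, (-(t ^ 2) * cc j)
        = ∑ u ∈ (Finset.range N).powerset,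
            (∏ j ∈ u, (-(t ^ 2) * cc j)) * ∏ j ∈ Finset.range N \ u, (1 : ℝ) := by
          simp
      _ = ∏ j ∈ Finset.range N, (-(t ^ 2) * cc j + 1) :=
          (Finset.prod_add (fun j => -(t ^ 2) * cc j) (fun _ => (1 : ℝ)) (Finset.range N)).symm
      _ = ∏ j ∈ Finset.range N, ((1 : ℝ) - t ^ 2 / ((j : ℝ) + 1) ^ 2) := by
          apply Finset.prod_congr rfl
          intro j _
          unfold cc
          ring
  rw [heq] at htendsto
  have heuler : Tendsto (fun N => ∏ j ∈ Finset.range N, ((1 : ℝ) - t ^ 2 / ((j : ℝ) + 1) ^ 2))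
      atTop (𝓝 (Real.sin (π * t) / (π * t))) := by
    have h := (Real.tendsto_euler_sin_prod t).div_const (π * t)
    simpa only [mul_div_cancel_left₀ _ hπt] using h
  rw [key1]
  exact tendsto_nhds_unique htendsto heuler
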